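/- arXiv:2602.05198 — 2 statements merged into one kernel-verified Lean document; each statement's English description precedes it below -/
import Mathlib

section
/- Let A be an n×n positive semidefinite matrix, σ² > 0, and u ∈ ℝⁿ. For any index subset S ⊆ {1,…,n}, let A_S denote the principal submatrix and u_S the subvector. Then uᵀ(A + σ²I)⁻¹u ≥ u_Sᵀ(A_S + σ²I_S)⁻¹u_S. -/
open Matrix Finset

section Aux
variable {m : Type*} [Fintype m] [DecidableEq m]

lemma posDef_add_smul_one' (A : Matrix m m ℝ) (hA : A.PosSemidef)
    {σ2 : ℝ} (hσ : 0 < σ2) : (A + σ2 • (1 : Matrix m m ℝ)).PosDef := by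
  rw [Matrix.posDef_iff_dotProduct_mulVec]
  constructor
  · have h1 : (σ2 • (1 : Matrix m m ℝ)).IsHermitian := by
      simp [Matrix.IsHermitian]
    exact hA.1.add h1
  · intro x hx
    have h1 : (0:ℝ) ≤ star x ⬝ᵥ A *ᵥ x := hA.dotProduct_mulVec_nonneg x
    have h2 : (0:ℝ) < x ⬝ᵥ x := by
      simpa using Matrix.dotProduct_star_self_pos_iff.mpr hx
    have : (star x) ⬝ᵥ (A + σ2 • (1 : Matrix m m ℝ)) *ᵥ x
        = star x ⬝ᵥ A *ᵥ x + σ2 * (x ⬝ᵥ x) := by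
      simp [Matrix.add_mulVec, dotProduct_add, Matrix.smul_mulVec,
        smul_eq_mul]
    rw [this]
    nlinarith

lemma key_quadratic_bound (M : Matrix m m ℝ) (hM : M.PosDef) (u x : m → ℝ) :
    u ⬝ᵥ x + x ⬝ᵥ u - x ⬝ᵥ M *ᵥ x ≤ u ⬝ᵥ M⁻¹ *ᵥ u := by
  have hdet : IsUnit M.det := hM.isUnit.map (Matrix.detMonoidHom)
  have hMM : M * M⁻¹ = 1 := Matrix.mul_nonsing_inv M hdet
  have hinv : M *ᵥ (M⁻¹ *ᵥ u) = u := by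
    rw [Matrix.mulVec_mulVec, hMM, Matrix.one_mulVec]
  have hsym : Mᵀ = M := by
    have := hM.isHermitian
    simpa [Matrix.IsHermitian, Matrix.conjTranspose_eq_transpose_of_trivial] using this
  set y : m → ℝ := M⁻¹ *ᵥ u - x with hy
  have h0 : (0:ℝ) ≤ y ⬝ᵥ M *ᵥ y := by
    simpa using hM.posSemidef.dotProduct_mulVec_nonneg y
  have hMy : M *ᵥ y = u - M *ᵥ x := by
    rw [hy, Matrix.mulVec_sub, hinv]
  have hcross : (M⁻¹ *ᵥ u) ⬝ᵥ (M *ᵥ x) = u ⬝ᵥ x := by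
    rw [Matrix.dotProduct_mulVec, ← Matrix.mulVec_transpose, hsym, hinv]
  have hexp : y ⬝ᵥ M *ᵥ y
      = u ⬝ᵥ M⁻¹ *ᵥ u - x ⬝ᵥ u - u ⬝ᵥ x + x ⬝ᵥ M *ᵥ x := by
    rw [hMy, hy]
    rw [sub_dotProduct, dotProduct_sub, dotProduct_sub,
      hcross]
    have : (M⁻¹ *ᵥ u) ⬝ᵥ u = u ⬝ᵥ M⁻¹ *ᵥ u := dotProduct_comm _ _
    rw [this]; ring
  linarith [hexp ▸ h0]

end Aux

section Ext
variable {n : ℕ} (S : Finset (Fin n))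

/-- zero-extension of a vector on the subtype -/
noncomputable def extS (v : {i // i ∈ S} → ℝ) : Fin n → ℝ :=
  fun i => if h : i ∈ S then v ⟨i, h⟩ else 0

lemma extS_dot (v : {i // i ∈ S} → ℝ) (w : Fin n → ℝ) :
    extS S v ⬝ᵥ w = v ⬝ᵥ (fun i : {i // i ∈ S} => w i.val) := by
  unfold extS dotProduct
  rw [Finset.univ_eq_attach]
  calc ∑ i : Fin n, (if h : i ∈ S then v ⟨i, h⟩ else 0) * w i
      = ∑ i ∈ S, (if h : i ∈ S then v ⟨i, h⟩ else 0) * w i := by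
        symm
        apply Finset.sum_subset (Finset.subset_univ S)
        intro i _ hi
        simp [hi]
    _ = ∑ i ∈ S.attach, (if h : (i : Fin n) ∈ S then v ⟨i, h⟩ else 0) * w i :=
        (Finset.sum_attach S _).symm
    _ = ∑ i ∈ S.attach, v i * w i := Finset.sum_congr rfl (fun i _ => by simp)

end Ext

open Matrix

/-- the explained-variance quadratic form is monotone under adding indices. -/
theorem explained_variance_monotone
    (n : ℕ) (A : Matrix (Fin n) (Fin n) ℝ) (hA : A.PosSemidef)
    (σ2 : ℝ) (hσ : 0 < σ2) (u : Fin n → ℝ) (S : Finset (Fin n)) :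
    (fun i : {i // i ∈ S} => u i.val) ⬝ᵥ
        ((A.submatrix Subtype.val Subtype.val) +
          σ2 • (1 : Matrix {i // i ∈ S} {i // i ∈ S} ℝ))⁻¹ *ᵥ
        (fun i : {i // i ∈ S} => u i.val)
      ≤ u ⬝ᵥ (A + σ2 • (1 : Matrix (Fin n) (Fin n) ℝ))⁻¹ *ᵥ u := by
  classical
  set M : Matrix (Fin n) (Fin n) ℝ := A + σ2 • 1 with hMdef
  set N : Matrix {i // i ∈ S} {i // i ∈ S} ℝ :=
    (A.submatrix Subtype.val Subtype.val) + σ2 • 1 with hNdef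
  have hM : M.PosDef := posDef_add_smul_one' A hA hσ
  have hN : N.PosDef := posDef_add_smul_one' _ (hA.submatrix Subtype.val) hσ
  set uS : {i // i ∈ S} → ℝ := fun i => u i.val with huS
  set v : {i // i ∈ S} → ℝ := N⁻¹ *ᵥ uS with hv
  set x : Fin n → ℝ := extS S v with hx
  -- N *ᵥ v = uS
  have hNv : N *ᵥ v = uS := by
    have hdet : IsUnit N.det := hN.isUnit.map (Matrix.detMonoidHom)
    rw [hv, Matrix.mulVec_mulVec, Matrix.mul_nonsing_inv N hdet, Matrix.one_mulVec]
  -- submatrix of M is N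
  have hsubM : M.submatrix (Subtype.val : {i // i ∈ S} → Fin n) Subtype.val = N := by
    rw [hMdef, hNdef, Matrix.submatrix_add, Matrix.submatrix_smul]
    ext i j
    simp [Matrix.one_apply, Matrix.submatrix_apply, Subtype.val_inj]
  -- u ⬝ᵥ x
  have hux : u ⬝ᵥ x = uS ⬝ᵥ v := by
    rw [hx, dotProduct_comm, extS_dot, ← huS, dotProduct_comm]
  have hxu : x ⬝ᵥ u = uS ⬝ᵥ v := by
    rw [dotProduct_comm]; exact hux
  -- x ⬝ᵥ M *ᵥ x
  have hMx : (fun i : {i // i ∈ S} => (M *ᵥ x) i.val) = N *ᵥ v := by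
    funext i
    show (M *ᵥ x) i.val = (N *ᵥ v) i
    rw [← hsubM]
    show M i.val ⬝ᵥ x = (fun j : {i // i ∈ S} => M i.val j.val) ⬝ᵥ v
    rw [dotProduct_comm, hx, extS_dot, dotProduct_comm]
  have hxMx : x ⬝ᵥ M *ᵥ x = v ⬝ᵥ uS := by
    rw [hx, extS_dot, ← hx, hMx, hNv]
  have hkey := key_quadratic_bound M hM u x
  have hval : u ⬝ᵥ x + x ⬝ᵥ u - x ⬝ᵥ M *ᵥ x = uS ⬝ᵥ v := by
    rw [hux, hxu, hxMx, dotProduct_comm v uS]; ring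
  calc uS ⬝ᵥ N⁻¹ *ᵥ uS = uS ⬝ᵥ v := by rw [hv]
    _ = u ⬝ᵥ x + x ⬝ᵥ u - x ⬝ᵥ M *ᵥ x := hval.symm
    _ ≤ u ⬝ᵥ M⁻¹ *ᵥ u := hkey
end

section
/- Let F be a monotone submodular function on subsets of a finite ground set M with F(∅) = 0, and let k ≥ 1. If S₀ = ∅ and S_{t+1} = S_t ∪ {j_t} where j_t maximizes the marginal gain F(S_t ∪ {j}) − F(S_t) over j ∉ S_t, then F(S_k) ≥ (1 − (1 − 1/k)^k) · OPT ≥ (1 − 1/e) · OPT, where OPT = max{F(A) : A ⊆ M, |A| = k}. -/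
/-!
Submodularity bounds `F A - F Sₜ` by the sum of the marginal gains at `Sₜ` of the at most `k`
elements of `A`, hence by `k` times the greedy gain. So each greedy step shrinks the gap to `F A`
by the factor `1 - 1/k`, and `(1 - 1/k)^k ≤ 1/e`.
-/

open Finset Real

section Submodular

variable {ι : Type*} [DecidableEq ι] {F : Finset ι → ℝ}

theorem le_add_sum_marginal_gain
    (hsub : ∀ Y Z : Finset ι, Y ⊆ Z → ∀ l ∉ Z, F (insert l Z) - F Z ≤ F (insert l Y) - F Y)
    (B T : Finset ι) :
    F (B ∪ T) ≤ F B + ∑ j ∈ T \ B, (F (insert j B) - F B) := by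
  induction T using Finset.induction_on with
  | empty => simp
  | @insert a T haT ih =>
    by_cases haB : a ∈ B
    · rwa [union_insert, insert_eq_of_mem (mem_union_left T haB), insert_sdiff_of_mem T haB]
    · have haBT : a ∉ B ∪ T := by simp [haB, haT]
      have hgain := hsub B (B ∪ T) subset_union_left a haBT
      rw [union_insert, insert_sdiff_of_notMem T haB, sum_insert (by simp [haT])]
      linarith

theorem sub_le_card_mul_greedy_gain
    (hmono : ∀ Y Z : Finset ι, Y ⊆ Z → F Y ≤ F Z)
    (hsub : ∀ Y Z : Finset ι, Y ⊆ Z → ∀ l ∉ Z, F (insert l Z) - F Z ≤ F (insert l Y) - F Y)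
    {A B : Finset ι} {k : ℕ} (hA : A.card ≤ k) {j : ι}
    (hmax : ∀ j' ∉ B, F (insert j' B) - F B ≤ F (insert j B) - F B) :
    F A - F B ≤ k * (F (insert j B) - F B) := by
  have hgain_nonneg : 0 ≤ F (insert j B) - F B := sub_nonneg.2 (hmono _ _ (subset_insert j B))
  have hsum : ∑ j' ∈ A \ B, (F (insert j' B) - F B) ≤ (A \ B).card * (F (insert j B) - F B) := by
    simpa only [nsmul_eq_mul] using
      sum_le_card_nsmul _ _ _ fun j' hj' => hmax j' (mem_sdiff.1 hj').2
  have hcard : ((A \ B).card : ℝ) ≤ k := by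
    exact_mod_cast (card_le_card sdiff_subset).trans hA
  calc F A - F B ≤ ∑ j' ∈ A \ B, (F (insert j' B) - F B) := by
        linarith [hmono A (B ∪ A) subset_union_right, le_add_sum_marginal_gain hsub B A]
    _ ≤ (A \ B).card * (F (insert j B) - F B) := hsum
    _ ≤ k * (F (insert j B) - F B) := mul_le_mul_of_nonneg_right hcard hgain_nonneg

theorem sub_greedy_step_le
    (hmono : ∀ Y Z : Finset ι, Y ⊆ Z → F Y ≤ F Z)
    (hsub : ∀ Y Z : Finset ι, Y ⊆ Z → ∀ l ∉ Z, F (insert l Z) - F Z ≤ F (insert l Y) - F Y)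
    {A B : Finset ι} {k : ℕ} (hk : 0 < k) (hA : A.card ≤ k) {j : ι}
    (hmax : ∀ j' ∉ B, F (insert j' B) - F B ≤ F (insert j B) - F B) :
    F A - F (insert j B) ≤ (1 - 1 / (k : ℝ)) * (F A - F B) := by
  have hgap := sub_le_card_mul_greedy_gain hmono hsub hA hmax
  have hk' : (0 : ℝ) < k := by exact_mod_cast hk
  have hdiv : (F A - F B) / k ≤ F (insert j B) - F B := by
    rw [div_le_iff₀ hk']
    linarith
  have hexpand : (1 - 1 / (k : ℝ)) * (F A - F B) = (F A - F B) - (F A - F B) / k := by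
    field_simp
  linarith

end Submodular

theorem greedy_submodular_guarantee_general
    {ι : Type*} [DecidableEq ι]
    (F : Finset ι → ℝ)
    (hmono : ∀ Y Z : Finset ι, Y ⊆ Z → F Y ≤ F Z)
    (hsub : ∀ (Y Z : Finset ι), Y ⊆ Z → ∀ l ∉ Z,
      F (insert l Z) - F Z ≤ F (insert l Y) - F Y)
    (hempty : F ∅ = 0)
    (k : ℕ) (hk : 1 ≤ k)
    (S : ℕ → Finset ι) (hS0 : S 0 = ∅)
    (hgreedy : ∀ t < k, ∃ j ∉ S t,
      S (t + 1) = insert j (S t) ∧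
      ∀ j' ∉ S t, F (insert j' (S t)) - F (S t) ≤ F (insert j (S t)) - F (S t))
    (OPT : ℝ)
    (hOPT : ∃ A : Finset ι, A.card = k ∧ F A = OPT) :
    (1 - (1 - 1 / (k : ℝ)) ^ k) * OPT ≤ F (S k) ∧
      (1 - 1 / Real.exp 1) * OPT ≤ (1 - (1 - 1 / (k : ℝ)) ^ k) * OPT := by
  obtain ⟨A, hA, rfl⟩ := hOPT
  have hk' : (1 : ℝ) ≤ k := by exact_mod_cast hk
  have hfactor : 0 ≤ 1 - 1 / (k : ℝ) := sub_nonneg.2 (div_le_one_of_le₀ hk' k.cast_nonneg)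
  have hgap : F A - F (S k) ≤ (1 - 1 / (k : ℝ)) ^ k * F A := by
    have := le_geom (u := fun t => F A - F (S t)) hfactor k fun t ht => by
      obtain ⟨j, -, hstep, hmax⟩ := hgreedy t ht
      simpa only [hstep] using sub_greedy_step_le hmono hsub (by omega) hA.le hmax
    simpa only [hS0, hempty, sub_zero] using this
  have hexp : (1 - 1 / (k : ℝ)) ^ k ≤ 1 / exp 1 := by
    simpa only [exp_neg, one_div] using one_sub_div_pow_le_exp_neg hk'
  have hOPT_nonneg : 0 ≤ F A := hempty ▸ hmono ∅ A (empty_subset A)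
  exact ⟨by linarith, mul_le_mul_of_nonneg_right (by linarith) hOPT_nonneg⟩

/-- the Nemhauser–Wolsey–Fisher greedy `(1 - 1/e)` guarantee for monotone
submodular maximization under a cardinality constraint. -/
theorem greedy_submodular_guarantee
    {ι : Type*} [Fintype ι] [DecidableEq ι]
    (F : Finset ι → ℝ)
    (hmono : ∀ Y Z : Finset ι, Y ⊆ Z → F Y ≤ F Z)
    (hsub : ∀ (Y Z : Finset ι), Y ⊆ Z → ∀ l ∉ Z,
      F (insert l Z) - F Z ≤ F (insert l Y) - F Y)
    (hempty : F ∅ = 0)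
    (k : ℕ) (hk : 1 ≤ k)
    (S : ℕ → Finset ι) (hS0 : S 0 = ∅)
    (hgreedy : ∀ t < k, ∃ j ∉ S t,
      S (t + 1) = insert j (S t) ∧
      ∀ j' ∉ S t, F (insert j' (S t)) - F (S t) ≤ F (insert j (S t)) - F (S t))
    (OPT : ℝ)
    (hOPT : ∃ A : Finset ι, A.card = k ∧ F A = OPT)
    (hOPTmax : ∀ A : Finset ι, A.card = k → F A ≤ OPT) :
    (1 - (1 - 1 / (k : ℝ)) ^ k) * OPT ≤ F (S k) ∧
      (1 - 1 / Real.exp 1) * OPT ≤ (1 - (1 - 1 / (k : ℝ)) ^ k) * OPT :=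
  greedy_submodular_guarantee_general F hmono hsub hempty k hk S hS0 hgreedy OPT hOPT
end
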